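/- If γ^α(F,a,b) < ∞, then the function t ↦ γ^α(F,a,t) is continuous on [a,b]. In particular the mass function is atomless: no single point of the curve carries nonzero mass. -/

import Mathlib

/-!
The mass is additive over adjacent intervals: cutting a subdivision of `[s, u]` at `t` replaces
one increment by two, each at most `ε ^ α` where `ε` is the oscillation of `w` at the mesh scale,
and `ε → 0` with the mesh by uniform continuity. If `γ(a, b) < ∞`, fix `δ` with
`γ_δ(a, b) ≥ γ(a, b) - ε`. For `[x, y] ⊆ [a, b]` of length at most `δ`, bounding `γ_δ(x, y)` by
the single increment `|w y - w x| ^ α / Γ(α + 1)` and comparing with additivity gives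
`γ(x, y) ≤ |w y - w x| ^ α / Γ(α + 1) + ε`, which is small for `y` close to `x`.
-/

open Set
open scoped ENNReal

structure Subdivision (a b : ℝ) where
  k : ℕ
  t : ℕ → ℝ
  first : t 0 = a
  last : t k = b
  mono : ∀ i < k, t i < t (i + 1)

def Subdivision.MeshLE {a b : ℝ} (P : Subdivision a b) (δ : ℝ) : Prop :=
  ∀ i < P.k, P.t (i + 1) - P.t i ≤ δ

noncomputable def sigmaSum {n : ℕ} (α : ℝ) (w : ℝ → EuclideanSpace ℝ (Fin n))
    {a b : ℝ} (P : Subdivision a b) : ℝ :=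
  (∑ i ∈ Finset.range P.k, ‖w (P.t (i + 1)) - w (P.t i)‖ ^ α) / Real.Gamma (α + 1)

noncomputable def gammaDelta {n : ℕ} (α : ℝ) (w : ℝ → EuclideanSpace ℝ (Fin n))
    (a b δ : ℝ) : ℝ≥0∞ :=
  ⨅ (P : Subdivision a b) (_ : P.MeshLE δ), ENNReal.ofReal (sigmaSum α w P)

noncomputable def massFn {n : ℕ} (α : ℝ) (w : ℝ → EuclideanSpace ℝ (Fin n))
    (a b : ℝ) : ℝ≥0∞ :=
  ⨆ (δ : ℝ) (_ : 0 < δ), gammaDelta α w a b δ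

namespace Subdivision

variable {a b c : ℝ}

theorem monotoneOn_t (P : Subdivision a b) : MonotoneOn P.t (Iic P.k) :=
  monotoneOn_of_le_add_one ordConnected_Iic fun i _ _ hi => (P.mono i hi).le

theorem t_mem_Icc (P : Subdivision a b) {i : ℕ} (hi : i ≤ P.k) : P.t i ∈ Icc a b := by
  refine ⟨?_, ?_⟩
  · simpa only [P.first] using P.monotoneOn_t (Nat.zero_le P.k) hi (Nat.zero_le i)
  · simpa only [P.last] using P.monotoneOn_t hi (le_refl P.k) hi

theorem exists_mem_Icc_t (P : Subdivision a b) (hk : 0 < P.k) {x : ℝ} (hx : x ∈ Icc a b) :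
    ∃ j < P.k, x ∈ Icc (P.t j) (P.t (j + 1)) := by
  set j := Nat.findGreatest (fun i => P.t i ≤ x) (P.k - 1)
  have hjk : j ≤ P.k - 1 := Nat.findGreatest_le _
  have hj : P.t j ≤ x := Nat.findGreatest_spec (P := fun i => P.t i ≤ x) (Nat.zero_le _)
    (by rw [P.first]; exact hx.1)
  refine ⟨j, by omega, hj, ?_⟩
  rcases lt_or_ge j (P.k - 1) with hlt | hge
  · exact (not_le.mp (Nat.findGreatest_is_greatest (P := fun i => P.t i ≤ x)
      (Nat.lt_succ_self j) (by omega))).le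
  · rw [show j + 1 = P.k by omega, P.last]
    exact hx.2

noncomputable def endpoints (h : a ≤ b) : Subdivision a b where
  k := if a < b then 1 else 0
  t i := if i = 0 then a else b
  first := rfl
  last := by
    by_cases hab : a < b
    · simp [hab]
    · simpa [hab] using le_antisymm h (not_lt.mp hab)
  mono i hi := by
    split_ifs at hi with hab
    · obtain rfl : i = 0 := by omega
      simpa using hab
    · omega

def take (P : Subdivision a b) (j : ℕ) (hj : j ≤ P.k) : Subdivision a (P.t j) where
  k := j
  t := P.t
  first := P.first
  last := rfl
  mono i hi := P.mono i (by omega)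

def drop (P : Subdivision a b) (j : ℕ) (hj : j ≤ P.k) : Subdivision (P.t j) b where
  k := P.k - j
  t i := P.t (j + i)
  first := rfl
  last := by simp only [Nat.add_sub_cancel' hj, P.last]
  mono i hi := P.mono (j + i) (by omega)

def append (P : Subdivision a b) (Q : Subdivision b c) : Subdivision a c where
  k := P.k + Q.k
  t i := if i ≤ P.k then P.t i else Q.t (i - P.k)
  first := by simp [P.first]
  last := by
    split_ifs with h
    · obtain hQ : Q.k = 0 := by omega
      rw [hQ, add_zero, P.last, ← Q.first, ← hQ, Q.last]
    · simp [Q.last]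
  mono i hi := by
    split_ifs with h₁ h₂ h₂
    · exact P.mono i (by omega)
    · obtain rfl : i = P.k := by omega
      simpa only [Nat.add_sub_cancel_left, P.last, Q.first] using Q.mono 0 (by omega)
    · omega
    · rw [show i + 1 - P.k = i - P.k + 1 by omega]
      exact Q.mono _ (by omega)

theorem append_t_of_le (P : Subdivision a b) (Q : Subdivision b c) {i : ℕ} (hi : i ≤ P.k) :
    (P.append Q).t i = P.t i :=
  if_pos hi

theorem append_t_add (P : Subdivision a b) (Q : Subdivision b c) (m : ℕ) :
    (P.append Q).t (P.k + m) = Q.t m := by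
  rcases m with _ | m
  · simp [append, P.last, Q.first]
  · simp [append]

variable {δ : ℝ}

theorem meshLE_endpoints (h : a ≤ b) (hδ : b - a ≤ δ) : (endpoints h).MeshLE δ := by
  intro i hi
  by_cases hab : a < b
  · obtain rfl : i = 0 := by simp only [endpoints, if_pos hab] at hi; omega
    simpa [endpoints] using hδ
  · simp [endpoints, hab] at hi

theorem MeshLE.take {P : Subdivision a b} (hP : P.MeshLE δ) (j : ℕ) (hj : j ≤ P.k) :
    (P.take j hj).MeshLE δ :=
  fun i hi => hP i (lt_of_lt_of_le hi hj)

theorem MeshLE.drop {P : Subdivision a b} (hP : P.MeshLE δ) (j : ℕ) (hj : j ≤ P.k) :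
    (P.drop j hj).MeshLE δ :=
  fun i hi => hP (j + i) (by simp only [Subdivision.drop] at hi; omega)

theorem MeshLE.append {P : Subdivision a b} {Q : Subdivision b c} (hP : P.MeshLE δ)
    (hQ : Q.MeshLE δ) : (P.append Q).MeshLE δ := by
  intro i hi
  rcases lt_or_ge i P.k with h | h
  · rw [append_t_of_le P Q h, append_t_of_le P Q h.le]
    exact hP i h
  · obtain ⟨m, rfl⟩ := Nat.exists_eq_add_of_le h
    rw [add_assoc, append_t_add, append_t_add]
    exact hQ m (by simp only [Subdivision.append] at hi; omega)

variable {n : ℕ} {α : ℝ} {w : ℝ → EuclideanSpace ℝ (Fin n)}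

theorem sigmaSum_nonneg (hα : 0 ≤ α) (P : Subdivision a b) : 0 ≤ sigmaSum α w P := by
  unfold sigmaSum
  positivity

theorem sigmaSum_append (P : Subdivision a b) (Q : Subdivision b c) :
    sigmaSum α w (P.append Q) = sigmaSum α w P + sigmaSum α w Q := by
  unfold sigmaSum
  rw [← add_div, show (P.append Q).k = P.k + Q.k from rfl, Finset.sum_range_add]
  congr 2
  · refine Finset.sum_congr rfl fun i hi => ?_
    rw [Finset.mem_range] at hi
    rw [append_t_of_le P Q hi, append_t_of_le P Q hi.le]
  · refine Finset.sum_congr rfl fun m _ => ?_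
    rw [add_assoc, append_t_add, append_t_add]

theorem sigmaSum_take_add_sigmaSum_drop (P : Subdivision a b) (j : ℕ) (hj : j ≤ P.k) :
    sigmaSum α w (P.take j hj) + sigmaSum α w (P.drop j hj) = sigmaSum α w P := by
  unfold sigmaSum
  rw [← add_div]
  simp only [Subdivision.take, Subdivision.drop, ← add_assoc]
  rw [← Finset.sum_range_add, Nat.add_sub_cancel' hj]

theorem sigmaSum_take_mono (hα : 0 ≤ α) (P : Subdivision a b) {j j' : ℕ} (hj : j ≤ P.k)
    (hj' : j' ≤ P.k) (hjj' : j ≤ j') :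
    sigmaSum α w (P.take j hj) ≤ sigmaSum α w (P.take j' hj') := by
  unfold sigmaSum
  gcongr
  exact Finset.sum_le_sum_of_subset_of_nonneg (Finset.range_subset_range.mpr hjj')
    fun _ _ _ => by positivity

theorem sigmaSum_endpoints_le (hα : 0 ≤ α) (h : a ≤ b) :
    sigmaSum α w (endpoints h) ≤ ‖w b - w a‖ ^ α / Real.Gamma (α + 1) := by
  by_cases hab : a < b
  · simp [sigmaSum, endpoints, hab]
  · simp only [sigmaSum, endpoints, if_neg hab, Finset.range_zero, Finset.sum_empty, zero_div]
    positivity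

theorem exists_split {ε : ℝ} (hα : 0 ≤ α) (hε : 0 ≤ ε) (P : Subdivision a c)
    (hP : P.MeshLE δ) (hb : b ∈ Icc a c)
    (hosc : ∀ p ∈ Icc a c, ∀ q ∈ Icc a c, dist p q ≤ δ → dist (w p) (w q) ≤ ε) :
    ∃ (P₁ : Subdivision a b) (P₂ : Subdivision b c), P₁.MeshLE δ ∧ P₂.MeshLE δ ∧
      sigmaSum α w P₁ + sigmaSum α w P₂ ≤ sigmaSum α w P + 2 * ε ^ α / Real.Gamma (α + 1) := by
  rcases Nat.eq_zero_or_pos P.k with hk | hk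
  · obtain rfl : a = c := by simpa only [hk, P.first] using P.last
    obtain rfl : b = a := le_antisymm hb.2 hb.1
    refine ⟨P, P, hP, hP, ?_⟩
    simp only [sigmaSum, hk, Finset.range_zero, Finset.sum_empty, zero_div, add_zero]
    positivity
  obtain ⟨j, hj, hbj, hbj'⟩ := P.exists_mem_Icc_t hk hb
  have hgap : P.t (j + 1) - P.t j ≤ δ := hP j hj
  have hinc : ∀ p ∈ Icc (P.t j) (P.t (j + 1)), ∀ q ∈ Icc (P.t j) (P.t (j + 1)), q ≤ p →
      ‖w p - w q‖ ^ α / Real.Gamma (α + 1) ≤ ε ^ α / Real.Gamma (α + 1) := by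
    intro p hp q hq hqp
    have hIcc : Icc (P.t j) (P.t (j + 1)) ⊆ Icc a c :=
      Icc_subset_Icc (P.t_mem_Icc hj.le).1 (P.t_mem_Icc hj).2
    have hpq : dist p q ≤ δ := by
      rw [Real.dist_eq, abs_of_nonneg (sub_nonneg.mpr hqp)]
      linarith [hp.2, hq.1]
    gcongr
    simpa only [dist_eq_norm] using hosc p (hIcc hp) q (hIcc hq) hpq
  refine ⟨(P.take j hj.le).append (endpoints hbj), (endpoints hbj').append (P.drop (j + 1) hj),
    (hP.take j hj.le).append (meshLE_endpoints hbj (by linarith)),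
    (meshLE_endpoints hbj' (by linarith)).append (hP.drop (j + 1) hj), ?_⟩
  have hseg₁ := (sigmaSum_endpoints_le (w := w) hα hbj).trans
    (hinc b ⟨hbj, hbj'⟩ (P.t j) ⟨le_rfl, by linarith⟩ hbj)
  have hseg₂ := (sigmaSum_endpoints_le (w := w) hα hbj').trans
    (hinc (P.t (j + 1)) ⟨by linarith, le_rfl⟩ b ⟨hbj, hbj'⟩ hbj')
  have htake := sigmaSum_take_mono (w := w) hα P (j' := j + 1) hj.le hj (Nat.le_add_right j 1)
  rw [sigmaSum_append, sigmaSum_append, ← sigmaSum_take_add_sigmaSum_drop P (j + 1) hj,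
    two_mul, add_div]
  linarith [add_le_add (add_le_add htake hseg₁) hseg₂]

end Subdivision

section MassFunction

open Filter Topology Subdivision

variable {n : ℕ} {α : ℝ} {w : ℝ → EuclideanSpace ℝ (Fin n)} {a b c δ δ' : ℝ}

theorem gammaDelta_le_ofReal {P : Subdivision a b} (hP : P.MeshLE δ) :
    gammaDelta α w a b δ ≤ ENNReal.ofReal (sigmaSum α w P) :=
  iInf₂_le P hP

theorem gammaDelta_anti (h : δ ≤ δ') : gammaDelta α w a b δ' ≤ gammaDelta α w a b δ :=
  le_iInf₂ fun P hP => iInf₂_le P fun i hi => (hP i hi).trans h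

theorem gammaDelta_le_massFn (hδ : 0 < δ) : gammaDelta α w a b δ ≤ massFn α w a b :=
  le_iSup₂ (f := fun δ (_ : 0 < δ) => gammaDelta α w a b δ) δ hδ

theorem massFn_self (α : ℝ) (w : ℝ → EuclideanSpace ℝ (Fin n)) (a : ℝ) : massFn α w a a = 0 := by
  refine nonpos_iff_eq_zero.mp (iSup₂_le fun δ hδ => ?_)
  have hσ : sigmaSum α w (endpoints (le_refl a)) = 0 := by simp [sigmaSum, endpoints]
  simpa [hσ] using gammaDelta_le_ofReal (α := α) (w := w) (meshLE_endpoints (le_refl a)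
    (by rw [sub_self]; exact hδ.le))

theorem gammaDelta_le_ofReal_rpow (hα : 0 ≤ α) (h : a ≤ b) (hδ : b - a ≤ δ) :
    gammaDelta α w a b δ ≤ ENNReal.ofReal (‖w b - w a‖ ^ α / Real.Gamma (α + 1)) :=
  (gammaDelta_le_ofReal (meshLE_endpoints h hδ)).trans
    (ENNReal.ofReal_le_ofReal (sigmaSum_endpoints_le hα h))

theorem gammaDelta_le_add : gammaDelta α w a c δ ≤ gammaDelta α w a b δ + gammaDelta α w b c δ := by
  conv_rhs => simp only [gammaDelta, ENNReal.iInf_add, ENNReal.add_iInf]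
  refine le_iInf₂ fun Q hQ => le_iInf₂ fun P hP => ?_
  calc gammaDelta α w a c δ ≤ ENNReal.ofReal (sigmaSum α w (P.append Q)) :=
        gammaDelta_le_ofReal (hP.append hQ)
    _ ≤ _ := by rw [sigmaSum_append]; exact ENNReal.ofReal_add_le

theorem add_gammaDelta_le {ε : ℝ} (hα : 0 ≤ α) (hε : 0 ≤ ε) (hb : b ∈ Icc a c)
    (hosc : ∀ p ∈ Icc a c, ∀ q ∈ Icc a c, dist p q ≤ δ → dist (w p) (w q) ≤ ε) :
    gammaDelta α w a b δ + gammaDelta α w b c δ ≤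
      gammaDelta α w a c δ + ENNReal.ofReal (2 * ε ^ α / Real.Gamma (α + 1)) := by
  conv_rhs => simp only [gammaDelta, ENNReal.iInf_add]
  refine le_iInf₂ fun P hP => ?_
  obtain ⟨P₁, P₂, hP₁, hP₂, hsum⟩ := P.exists_split hα hε hP hb hosc
  calc gammaDelta α w a b δ + gammaDelta α w b c δ
      ≤ ENNReal.ofReal (sigmaSum α w P₁) + ENNReal.ofReal (sigmaSum α w P₂) :=
        add_le_add (gammaDelta_le_ofReal hP₁) (gammaDelta_le_ofReal hP₂)
    _ = ENNReal.ofReal (sigmaSum α w P₁ + sigmaSum α w P₂) :=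
        (ENNReal.ofReal_add (sigmaSum_nonneg hα P₁) (sigmaSum_nonneg hα P₂)).symm
    _ ≤ _ := (ENNReal.ofReal_le_ofReal hsum).trans ENNReal.ofReal_add_le

theorem massFn_le_add : massFn α w a c ≤ massFn α w a b + massFn α w b c :=
  iSup₂_le fun _ hδ => gammaDelta_le_add.trans
    (add_le_add (gammaDelta_le_massFn hδ) (gammaDelta_le_massFn hδ))

theorem add_massFn_le (hw : ContinuousOn w (Icc a c)) (hα : 0 < α) (hb : b ∈ Icc a c) :
    massFn α w a b + massFn α w b c ≤ massFn α w a c := by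
  have hlim : Tendsto
      (fun ε : ℝ => massFn α w a c + ENNReal.ofReal (2 * ε ^ α / Real.Gamma (α + 1)))
      (𝓝[>] 0) (𝓝 (massFn α w a c)) := by
    have h0 : Tendsto (fun ε : ℝ => 2 * ε ^ α / Real.Gamma (α + 1)) (𝓝 0) (𝓝 0) := by
      simpa [Real.zero_rpow hα.ne'] using
        ((continuous_const.mul (Real.continuous_rpow_const hα.le)).div_const _).tendsto 0
    simpa using tendsto_const_nhds.add (ENNReal.tendsto_ofReal (h0.mono_left nhdsWithin_le_nhds))
  refine ge_of_tendsto hlim (eventually_nhdsWithin_of_forall fun ε (hε : 0 < ε) => ?_)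
  obtain ⟨δ₀, hδ₀, hosc⟩ := Metric.uniformContinuousOn_iff_le.mp
    (isCompact_Icc.uniformContinuousOn_of_continuous hw) ε hε
  refine ENNReal.biSup_add_biSup_le' ⟨1, one_pos⟩ ⟨1, one_pos⟩ fun δ₁ hδ₁ δ₂ hδ₂ => ?_
  have hδ : 0 < min (min δ₁ δ₂) δ₀ := lt_min (lt_min hδ₁ hδ₂) hδ₀
  set δ := min (min δ₁ δ₂) δ₀
  calc gammaDelta α w a b δ₁ + gammaDelta α w b c δ₂
      ≤ gammaDelta α w a b δ + gammaDelta α w b c δ :=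
        add_le_add (gammaDelta_anti ((min_le_left _ _).trans (min_le_left _ _)))
          (gammaDelta_anti ((min_le_left _ _).trans (min_le_right _ _)))
    _ ≤ gammaDelta α w a c δ + ENNReal.ofReal (2 * ε ^ α / Real.Gamma (α + 1)) :=
        add_gammaDelta_le hα.le hε.le hb fun p hp q hq hpq =>
          hosc p hp q hq (hpq.trans (min_le_right _ _))
    _ ≤ _ := by gcongr; exact gammaDelta_le_massFn hδ

theorem massFn_add (hw : ContinuousOn w (Icc a c)) (hα : 0 < α) (hb : b ∈ Icc a c) :
    massFn α w a b + massFn α w b c = massFn α w a c :=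
  le_antisymm (add_massFn_le hw hα hb) massFn_le_add

end MassFunction

section Continuity

open Filter Topology

variable {n : ℕ} {α : ℝ} {w : ℝ → EuclideanSpace ℝ (Fin n)} {a b : ℝ}

theorem exists_massFn_le_gammaDelta_add (hfin : massFn α w a b ≠ ⊤) {ε : ℝ≥0∞} (hε : 0 < ε) :
    ∃ δ > 0, massFn α w a b ≤ gammaDelta α w a b δ + ε := by
  rcases eq_or_ne (massFn α w a b) 0 with h0 | h0
  · exact ⟨1, one_pos, by simp [h0]⟩
  have hlt : massFn α w a b - ε < ⨆ (δ : ℝ) (_ : 0 < δ), gammaDelta α w a b δ :=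
    ENNReal.sub_lt_self hfin h0 hε.ne'
  simp only [lt_iSup_iff] at hlt
  obtain ⟨δ, hδ, hlt⟩ := hlt
  exact ⟨δ, hδ, tsub_le_iff_right.mp hlt.le⟩

theorem massFn_le_ofReal_add (hw : ContinuousOn w (Icc a b)) (hα : 0 < α)
    (hfin : massFn α w a b ≠ ⊤) {ε : ℝ≥0∞} (hε : 0 < ε) :
    ∃ δ > 0, ∀ x y, a ≤ x → x ≤ y → y ≤ b → y - x ≤ δ →
      massFn α w x y ≤ ENNReal.ofReal (‖w y - w x‖ ^ α / Real.Gamma (α + 1)) + ε := by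
  obtain ⟨δ, hδ, hγ⟩ := exists_massFn_le_gammaDelta_add hfin hε
  refine ⟨δ, hδ, fun x y hax hxy hyb hyx => ?_⟩
  have hadd : massFn α w a x + massFn α w x y + massFn α w y b = massFn α w a b := by
    rw [massFn_add (hw.mono (Icc_subset_Icc le_rfl hyb)) hα ⟨hax, hxy⟩,
      massFn_add hw hα ⟨hax.trans hxy, hyb⟩]
  have hax_fin : massFn α w a x ≠ ⊤ :=
    ne_top_of_le_ne_top hfin (by rw [← hadd, add_assoc]; exact le_self_add)
  have hyb_fin : massFn α w y b ≠ ⊤ :=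
    ne_top_of_le_ne_top hfin (by rw [← hadd]; exact le_add_self)
  have hsplit : gammaDelta α w a b δ ≤ massFn α w a x
      + ENNReal.ofReal (‖w y - w x‖ ^ α / Real.Gamma (α + 1)) + massFn α w y b :=
    calc gammaDelta α w a b δ
        ≤ gammaDelta α w a x δ + gammaDelta α w x y δ + gammaDelta α w y b δ :=
          gammaDelta_le_add.trans (add_le_add gammaDelta_le_add le_rfl)
      _ ≤ _ := add_le_add (add_le_add (gammaDelta_le_massFn hδ)
          (gammaDelta_le_ofReal_rpow hα.le hxy hyx)) (gammaDelta_le_massFn hδ)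
  rw [← ENNReal.add_le_add_iff_left hax_fin, ← ENNReal.add_le_add_iff_right hyb_fin, hadd]
  exact hγ.trans ((add_le_add hsplit le_rfl).trans_eq (by ring))

theorem continuousOn_massFn (hw : ContinuousOn w (Icc a b)) (hα : 0 < α)
    (hfin : massFn α w a b ≠ ⊤) : ContinuousOn (massFn α w a) (Icc a b) := by
  intro t ht
  have hadd : ∀ x y, a ≤ x → x ≤ y → y ≤ b →
      massFn α w a x + massFn α w x y = massFn α w a y := fun x y hax hxy hyb =>
    massFn_add (hw.mono (Icc_subset_Icc le_rfl hyb)) hα ⟨hax, hxy⟩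
  have ht_fin : massFn α w a t ≠ ⊤ :=
    ne_top_of_le_ne_top hfin (hadd t b ht.1 ht.2 le_rfl ▸ le_self_add)
  have hw_t : Tendsto (fun x => ENNReal.ofReal (‖w x - w t‖ ^ α / Real.Gamma (α + 1)))
      (𝓝[Icc a b] t) (𝓝 0) := by
    have h := (((hw t ht).sub (continuousWithinAt_const (b := w t))).norm.rpow_const
      (Or.inr hα.le)).div_const (Real.Gamma (α + 1))
    simpa [Real.zero_rpow hα.ne'] using ENNReal.tendsto_ofReal h.tendsto
  refine (ENNReal.tendsto_nhds ht_fin).mpr fun ε hε => ?_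
  obtain ⟨δ, hδ, hsmall⟩ := massFn_le_ofReal_add hw hα hfin (ENNReal.half_pos hε.ne')
  have hshort : ∀ x y, a ≤ x → x ≤ y → y ≤ b → y - x ≤ δ →
      ENNReal.ofReal (‖w y - w x‖ ^ α / Real.Gamma (α + 1)) < ε / 2 → massFn α w x y ≤ ε :=
    fun x y hax hxy hyb hyx hwxy => (hsmall x y hax hxy hyb hyx).trans
      ((add_le_add hwxy.le le_rfl).trans_eq (ENNReal.add_halves ε))
  filter_upwards [hw_t.eventually (gt_mem_nhds (ENNReal.half_pos hε.ne')),
    (eventually_abs_sub_lt t hδ).filter_mono nhdsWithin_le_nhds, self_mem_nhdsWithin]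
    with x hwx hxt hx
  rcases le_total x t with hle | hle
  · have hγ := hshort x t hx.1 hle ht.2 (by linarith [neg_abs_le (x - t)])
      (by rwa [norm_sub_rev])
    rw [← hadd x t hx.1 hle ht.2]
    exact ⟨tsub_le_iff_right.mpr (add_le_add le_rfl hγ), le_self_add.trans le_self_add⟩
  · have hγ := hshort t x ht.1 hle hx.2 (by linarith [le_abs_self (x - t)]) hwx
    rw [← hadd t x ht.1 hle hx.2]
    exact ⟨tsub_le_self.trans le_self_add, add_le_add le_rfl hγ⟩

end Continuity

theorem massFn_continuous_general {n : ℕ} {a₀ b₀ : ℝ}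
    (w : ℝ → EuclideanSpace ℝ (Fin n))
    (hw : ContinuousOn w (Icc a₀ b₀))
    {α : ℝ} (hα : α ∈ Icc (1 : ℝ) (n : ℝ))
    {a b : ℝ} (ha : a₀ ≤ a) (hb : b ≤ b₀)
    (hfin : massFn α w a b ≠ ⊤) :
    ContinuousOn (fun t => massFn α w a t) (Icc a b) ∧
    ∀ t ∈ Icc a b, massFn α w t t = 0 :=
  ⟨continuousOn_massFn (hw.mono (Icc_subset_Icc ha hb)) (zero_lt_one.trans_le hα.1) hfin,
    fun t _ => massFn_self α w t⟩

/-- If γ^α(F,a,b) < ∞ then t ↦ γ^α(F,a,t) is continuous on [a,b];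
in particular the mass function is atomless (single points carry zero mass). -/
theorem massFn_continuous {n : ℕ} (hn : 1 ≤ n) {a₀ b₀ : ℝ}
    (w : ℝ → EuclideanSpace ℝ (Fin n))
    (hw : ContinuousOn w (Icc a₀ b₀)) (hinj : InjOn w (Icc a₀ b₀))
    {α : ℝ} (hα : α ∈ Icc (1 : ℝ) (n : ℝ))
    {a b : ℝ} (ha : a₀ ≤ a) (hab : a ≤ b) (hb : b ≤ b₀)
    (hfin : massFn α w a b ≠ ⊤) :
    ContinuousOn (fun t => massFn α w a t) (Icc a b) ∧
    ∀ t ∈ Icc a b, massFn α w t t = 0 :=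
  massFn_continuous_general w hw hα ha hb hfin
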